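/- There exists a constant c > 0 such that for all integers N ≥ 2 and all integers n with 1 ≤ n ≤ N−1, | −∑_{j=1}^n log( 2 sin(jπ/N) ) − (N/π)·Λ(nπ/N) | ≤ c · log N, where Λ is the Lobachevsky function. -/

import Mathlib

/-!
Put `h = π / N`. Since `log |2 sin u| = log (2 sin u)`, the sum `∑ log (2 sin (jh))` is `h⁻¹`
times a right-endpoint Riemann sum for `∫₀^{nh} log (2 sin u) = -Λ(nh)`, so the quantity to bound
is `h⁻¹` times the sum of the errors on the cells `[kh, (k+1)h]`. On the first cell the logarithmic
singularity is tamed by `log u ≤ log (2 sin u) ≤ log u + log 2`, which makes the error `O(h)`.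
On the `k`-th cell, `k ≥ 1`, the derivative `cot` is bounded by `1/(kh) + 1/(π - (k+1)h)`, so the
error is at most `h (1/k + 1/(N-1-k))`; the two resulting harmonic sums are each `≤ 1 + log N`.
-/

/-- The Lobachevsky function `Λ(x) = -∫₀ˣ log|2 sin u| du`. -/
noncomputable def Lob (x : ℝ) : ℝ := - ∫ u in (0 : ℝ)..x, Real.log |2 * Real.sin u|

open Real Set MeasureTheory intervalIntegral

theorem abs_mul_sub_integral_le_of_hasDerivWithinAt {f f' : ℝ → ℝ} {a b C : ℝ}
    (hab : a ≤ b) (hf : ∀ x ∈ Icc a b, HasDerivWithinAt f (f' x) (Icc a b) x)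
    (hC : ∀ x ∈ Icc a b, |f' x| ≤ C) :
    |(b - a) * f b - ∫ x in a..b, f x| ≤ C * (b - a) ^ 2 := by
  have hint : IntervalIntegrable f volume a b :=
    ContinuousOn.intervalIntegrable_of_Icc hab fun x hx => (hf x hx).continuousWithinAt
  have hC0 : 0 ≤ C := (abs_nonneg _).trans (hC a ⟨le_rfl, hab⟩)
  have hlip : ∀ x ∈ Icc a b, ‖f b - f x‖ ≤ C * (b - a) := fun x hx => by
    have := (convex_Icc a b).norm_image_sub_le_of_norm_hasDerivWithin_le hf hC hx ⟨hab, le_rfl⟩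
    rw [Real.norm_eq_abs (b - x), abs_of_nonneg (sub_nonneg.2 hx.2)] at this
    exact this.trans (mul_le_mul_of_nonneg_left (by linarith [hx.1]) hC0)
  have hsub : (b - a) * f b - ∫ x in a..b, f x = ∫ x in a..b, (f b - f x) := by
    rw [integral_sub intervalIntegrable_const hint, intervalIntegral.integral_const, smul_eq_mul]
  calc |(b - a) * f b - ∫ x in a..b, f x|
      ≤ C * (b - a) * |b - a| := hsub ▸ norm_integral_le_of_norm_le_const fun x hx =>
        hlip x (Ioc_subset_Icc_self ((uIoc_of_le hab) ▸ hx))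
    _ = C * (b - a) ^ 2 := by rw [abs_of_nonneg (sub_nonneg.2 hab)]; ring

theorem abs_mul_sub_integral_le_of_log_le {g : ℝ → ℝ} {h c : ℝ} (hh : 0 < h)
    (hg : IntervalIntegrable g volume 0 h)
    (hlow : ∀ u ∈ Ioc 0 h, log u ≤ g u) (hup : ∀ u ∈ Ioc 0 h, g u ≤ log u + c) :
    |h * g h - ∫ u in 0..h, g u| ≤ (1 + c) * h := by
  have hlog : IntervalIntegrable log volume 0 h := intervalIntegrable_log'
  have hint_low : h * log h - h ≤ ∫ u in 0..h, g u := by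
    have := integral_mono_on_of_le_Ioo hh.le hlog hg fun u hu => hlow u (Ioo_subset_Ioc_self hu)
    simpa [integral_log] using this
  have hint_up : ∫ u in 0..h, g u ≤ h * log h - h + h * c := by
    have := integral_mono_on_of_le_Ioo hh.le hg (hlog.add intervalIntegrable_const)
      fun u hu => hup u (Ioo_subset_Ioc_self hu)
    simpa [integral_add hlog intervalIntegrable_const, integral_log] using this
  have hval_low := mul_le_mul_of_nonneg_left (hlow h ⟨hh, le_rfl⟩) hh.le
  have hval_up := mul_le_mul_of_nonneg_left (hup h ⟨hh, le_rfl⟩) hh.le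
  rw [abs_le]
  constructor <;> nlinarith

noncomputable def rightEndpointError (f : ℝ → ℝ) (h : ℝ) (k : ℕ) : ℝ :=
  h * f ((k + 1) * h) - ∫ x in k * h..(k + 1) * h, f x

theorem mul_sum_sub_integral_eq_sum_rightEndpointError {f : ℝ → ℝ} {h : ℝ} {n : ℕ}
    (hf : ∀ k < n, IntervalIntegrable f volume (k * h) ((k + 1) * h)) :
    h * ∑ k ∈ Finset.range n, f ((k + 1) * h) - ∫ x in 0..n * h, f x =
      ∑ k ∈ Finset.range n, rightEndpointError f h k := by
  have := sum_integral_adjacent_intervals (a := fun k : ℕ => (k : ℝ) * h) (μ := volume)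
    (f := f) (n := n) (by exact_mod_cast hf)
  push_cast at this
  simp only [rightEndpointError]
  rw [Finset.sum_sub_distrib, ← Finset.mul_sum, this, zero_mul]

theorem sum_inv_le_one_add_log {s : Finset ℕ} {N : ℕ} (hs : s ⊆ Finset.Icc 1 N) :
    ∑ i ∈ s, (i : ℝ)⁻¹ ≤ 1 + log N :=
  calc ∑ i ∈ s, (i : ℝ)⁻¹ ≤ ∑ i ∈ Finset.Icc 1 N, (i : ℝ)⁻¹ :=
        Finset.sum_le_sum_of_subset_of_nonneg hs fun _ _ _ => by positivity
    _ = harmonic N := by simp [harmonic_eq_sum_Icc]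
    _ ≤ 1 + log N := harmonic_le_one_add_log N

theorem sum_Ico_inv_add_inv_sub_le {N n : ℕ} (hn : n < N) :
    ∑ k ∈ Finset.Ico 1 n, ((k : ℝ)⁻¹ + ((N - 1 - k : ℕ) : ℝ)⁻¹) ≤ 2 * (1 + log N) := by
  rw [Finset.sum_add_distrib,
    Finset.sum_Ico_reflect (fun i : ℕ => (i : ℝ)⁻¹) 1 (by omega : n ≤ N - 1 + 1)]
  have hleft := sum_inv_le_one_add_log (s := Finset.Ico 1 n) (N := N) fun i hi => by
    simp only [Finset.mem_Ico, Finset.mem_Icc] at hi ⊢; omega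
  have hright := sum_inv_le_one_add_log (s := Finset.Ico (N - 1 + 1 - n) (N - 1 + 1 - 1))
    (N := N) fun i hi => by simp only [Finset.mem_Ico, Finset.mem_Icc] at hi ⊢; omega
  linarith

theorem le_two_mul_sin {u : ℝ} (h0 : 0 ≤ u) (h1 : u ≤ π / 2) : u ≤ 2 * sin u :=
  calc u ≤ 4 / π * u := le_mul_of_one_le_left h0 ((one_le_div pi_pos).2 pi_le_four)
    _ = 2 * (2 / π * u) := by ring
    _ ≤ 2 * sin u := by linarith [mul_le_sin h0 h1]

theorem mul_cos_le_sin {x : ℝ} (h0 : 0 ≤ x) (hπ : x ≤ π) : x * cos x ≤ sin x := by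
  rcases le_or_gt (cos x) 0 with hc | hc
  · nlinarith [sin_nonneg_of_nonneg_of_le_pi h0 hπ]
  · have hx : x < π / 2 := by
      by_contra! h
      exact hc.not_ge (cos_nonpos_of_pi_div_two_le_of_le h (by linarith [pi_pos]))
    have := le_tan h0 hx
    rwa [tan_eq_sin_div_cos, le_div_iff₀ hc] at this

theorem cos_div_sin_le_inv {x : ℝ} (h0 : 0 < x) (hπ : x < π) : cos x / sin x ≤ x⁻¹ := by
  rw [div_le_iff₀ (sin_pos_of_pos_of_lt_pi h0 hπ), inv_mul_eq_div, le_div_iff₀ h0, mul_comm]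
  exact mul_cos_le_sin h0.le hπ.le

theorem abs_cos_div_sin_le {x : ℝ} (h0 : 0 < x) (hπ : x < π) :
    |cos x / sin x| ≤ x⁻¹ + (π - x)⁻¹ := by
  have hleft := cos_div_sin_le_inv h0 hπ
  have hright := cos_div_sin_le_inv (x := π - x) (by linarith) (by linarith)
  rw [cos_pi_sub, sin_pi_sub, neg_div] at hright
  have : 0 < x⁻¹ := inv_pos.2 h0
  have : 0 < (π - x)⁻¹ := inv_pos.2 (by linarith)
  rw [abs_le]
  constructor <;> linarith

theorem hasDerivAt_log_two_mul_sin {x : ℝ} (hx : sin x ≠ 0) :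
    HasDerivAt (fun u => log (2 * sin u)) (cos x / sin x) x := by
  have := ((hasDerivAt_sin x).const_mul 2).log (mul_ne_zero two_ne_zero hx)
  rwa [mul_div_mul_left _ _ two_ne_zero] at this

theorem intervalIntegrable_log_two_mul_sin (a b : ℝ) :
    IntervalIntegrable (fun u => log (2 * sin u)) volume a b :=
  (analyticOnNhd_const.mul analyticOnNhd_sin).meromorphicOn.intervalIntegrable_log

theorem lob_eq_neg_integral_log_two_mul_sin (x : ℝ) :
    Lob x = -∫ u in 0..x, log (2 * sin u) := by
  simp only [Lob, log_abs]

theorem abs_rightEndpointError_log_two_mul_sin_zero_le {h : ℝ} (h0 : 0 < h) (h1 : h ≤ π / 2) :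
    |rightEndpointError (fun u => log (2 * sin u)) h 0| ≤ (1 + log 2) * h := by
  simp only [rightEndpointError, Nat.cast_zero, zero_add, one_mul, zero_mul]
  refine abs_mul_sub_integral_le_of_log_le h0 (intervalIntegrable_log_two_mul_sin 0 h)
    (fun u hu => ?_) (fun u hu => ?_)
  · exact log_le_log hu.1 (le_two_mul_sin hu.1.le (hu.2.trans h1))
  · rw [add_comm, ← log_mul two_ne_zero hu.1.ne']
    exact log_le_log (by linarith [hu.1, le_two_mul_sin hu.1.le (hu.2.trans h1)])
      (by linarith [sin_le hu.1.le])

theorem abs_rightEndpointError_log_two_mul_sin_le {N k : ℕ} {h : ℝ} (hNh : N * h = π)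
    (hk : 1 ≤ k) (hkN : k + 2 ≤ N) :
    |rightEndpointError (fun u => log (2 * sin u)) h k|
      ≤ h * ((k : ℝ)⁻¹ + ((N - 1 - k : ℕ) : ℝ)⁻¹) := by
  have hh : 0 < h := pos_of_mul_pos_right (hNh ▸ pi_pos) (Nat.cast_nonneg N)
  have hk' : (1 : ℝ) ≤ k := by exact_mod_cast hk
  have hm : (1 : ℝ) ≤ (N - 1 - k : ℕ) := by exact_mod_cast (by omega : 1 ≤ N - 1 - k)
  have hgap : π - (k + 1) * h = (N - 1 - k : ℕ) * h := by
    rw [← hNh, Nat.cast_sub (by omega), Nat.cast_sub (by omega)]; push_cast; ring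
  have ha : 0 < k * h := by positivity
  have hb : 0 < π - (k + 1) * h := hgap ▸ by positivity
  have key := abs_mul_sub_integral_le_of_hasDerivWithinAt (f := fun u => log (2 * sin u))
    (f' := fun x => cos x / sin x) (C := (k * h)⁻¹ + (π - (k + 1) * h)⁻¹)
    (a := k * h) (b := (k + 1) * h) (by nlinarith) (fun x hx => ?deriv) (fun x hx => ?bound)
  · rw [show (k + 1) * h - k * h = h by ring, hgap] at key
    exact key.trans_eq (by field_simp)
  case deriv =>
    exact (hasDerivAt_log_two_mul_sin
      (sin_pos_of_pos_of_lt_pi (by linarith [hx.1]) (by linarith [hx.2])).ne').hasDerivWithinAt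
  case bound =>
    refine (abs_cos_div_sin_le (by linarith [hx.1]) (by linarith [hx.2])).trans ?_
    gcongr <;> linarith [hx.1, hx.2]

theorem sum_abs_rightEndpointError_log_two_mul_sin_le {N n : ℕ} {h : ℝ} (hNh : N * h = π)
    (hn1 : 1 ≤ n) (hn : n < N) :
    ∑ k ∈ Finset.range n, |rightEndpointError (fun u => log (2 * sin u)) h k|
      ≤ h * (3 + log 2 + 2 * log N) := by
  have hh : 0 < h := pos_of_mul_pos_right (hNh ▸ pi_pos) (Nat.cast_nonneg N)
  have hN : (2 : ℝ) ≤ N := by exact_mod_cast (by omega : 2 ≤ N)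
  have hfirst := abs_rightEndpointError_log_two_mul_sin_zero_le hh (by nlinarith)
  have hrest : ∑ k ∈ Finset.Ico 1 n, |rightEndpointError (fun u => log (2 * sin u)) h k|
      ≤ h * (2 * (1 + log N)) :=
    calc _ ≤ ∑ k ∈ Finset.Ico 1 n, h * ((k : ℝ)⁻¹ + ((N - 1 - k : ℕ) : ℝ)⁻¹) :=
          Finset.sum_le_sum fun k hk => abs_rightEndpointError_log_two_mul_sin_le hNh
            (Finset.mem_Ico.1 hk).1 (by have := (Finset.mem_Ico.1 hk).2; omega)
      _ ≤ h * (2 * (1 + log N)) := by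
          rw [← Finset.mul_sum]
          exact mul_le_mul_of_nonneg_left (sum_Ico_inv_add_inv_sub_le hn) hh.le
  rw [Finset.sum_range_eq_add_Ico _ hn1]
  linarith

theorem neg_sum_log_two_mul_sin_sub_mul_lob_eq {N : ℕ} (hN : N ≠ 0) (n : ℕ) :
    (-∑ j ∈ Finset.Icc 1 n, log (2 * sin (j * π / N))) - (N / π) * Lob (n * π / N)
      = -((N / π) *
          ∑ k ∈ Finset.range n, rightEndpointError (fun u => log (2 * sin u)) (π / N) k) := by
  have hsum : ∑ j ∈ Finset.Icc 1 n, log (2 * sin (j * π / N)) =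
      ∑ k ∈ Finset.range n, log (2 * sin ((k + 1) * (π / N))) := by
    rw [← Finset.Ico_add_one_right_eq_Icc, Finset.sum_Ico_eq_sum_range, add_tsub_cancel_right]
    refine Finset.sum_congr rfl fun k _ => ?_
    push_cast; ring_nf
  rw [← mul_sum_sub_integral_eq_sum_rightEndpointError fun _ _ =>
      intervalIntegrable_log_two_mul_sin _ _,
    lob_eq_neg_integral_log_two_mul_sin, hsum, show n * π / N = n * (π / N) by ring,
    mul_sub, ← mul_assoc, div_mul_div_cancel₀ pi_ne_zero, div_self (by exact_mod_cast hN),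
    one_mul]
  ring

/-- The standard estimate `s_n := -∑_{j=1}^n log(2 sin(jπ/N)) = (N/π)Λ(nπ/N) + O(log N)`,
uniformly in `1 ≤ n ≤ N-1`. -/
theorem log_sin_sum_estimate :
    ∃ c : ℝ, 0 < c ∧ ∀ N : ℕ, 2 ≤ N → ∀ n : ℕ, 1 ≤ n → n ≤ N - 1 →
      |(-∑ j ∈ Finset.Icc 1 n, Real.log (2 * Real.sin (j * Real.pi / N))) -
          ((N : ℝ) / Real.pi) * Lob (n * Real.pi / N)| ≤ c * Real.log N := by
  refine ⟨10, by norm_num, fun N hN n hn1 hn2 => ?_⟩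
  have hN' : (2 : ℝ) ≤ N := by exact_mod_cast hN
  have hNh : (N : ℝ) * (π / N) = π := mul_div_cancel₀ π (by positivity)
  rw [neg_sum_log_two_mul_sin_sub_mul_lob_eq (by omega), abs_neg, abs_mul,
    abs_of_pos (by positivity)]
  calc N / π * |∑ k ∈ Finset.range n, rightEndpointError (fun u => log (2 * sin u)) (π / N) k|
      ≤ N / π * (π / N * (3 + log 2 + 2 * log N)) := by
        gcongr
        exact (Finset.abs_sum_le_sum_abs _ _).trans
          (sum_abs_rightEndpointError_log_two_mul_sin_le hNh hn1 (by omega))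
    _ = 3 + log 2 + 2 * log N := by field_simp
    _ ≤ 10 * log N := by linarith [log_two_lt_d9, log_two_gt_d9, log_le_log two_pos hN']
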